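/- Let 𝒮 be a symmetric q×q real matrix with positive entries and let v be a positive vector with Σ_a v_a 𝒮_{a,b} = v_b for all b, normalized by Σ_a v_a = 1; define entropies S_a by v_a = e^{−S_a/2}. Let W(x) = v_{x_0} 𝒮_{x_0,x_1} v_{x_1}^{−1}, and for a basepoint x ∈ Λ define cylinder weights μ_{W,x}(Λ(w)) = Π_{j=1}^m W(w_j · w_{j−1} ⋯ w_1 · x) for finite words w = (w_1,…,w_m). Define the process Φ_{x,a}(m) := e^{S_a/2} Σ_{u ∈ 𝔄^{m−1}} μ_{W,x}(Λ(u·a)), the sum being over all words of length m whose last letter is a. Then for all m ≥ 1 and all a ∈ 𝔄, Φ_{x,a}(m+1) = Σ_{b∈𝔄} 𝒮_{a,b} Φ_{x,b}(m); i.e., the multifractal measure determined by W defines a stochastic process on the Eternal Symmetree without pruning governed by the stochastic matrix 𝒮. -/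

import Mathlib

/-- Prepend a letter `a` to a sequence `x`. -/
def prepend {q : ℕ} (a : Fin q) (x : ℕ → Fin q) : ℕ → Fin q
  | 0 => a
  | n + 1 => x n

/-- `prependStage w x j` is the sequence `w_j · w_{j-1} ⋯ w_1 · x`. -/
def prependStage {q : ℕ} (w : ℕ → Fin q) (x : ℕ → Fin q) : ℕ → ℕ → Fin q
  | 0 => x
  | j + 1 => prepend (w j) (prependStage w x j)

/-- The multifractal cylinder weight
`μ_{W,x}(Λ(w)) = ∏_{j=1}^m W(w_j · w_{j-1} ⋯ w_1 · x)` of a word of length `m`. -/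
noncomputable def mucyl {q : ℕ} (W : (ℕ → Fin q) → ℝ) (x : ℕ → Fin q)
    (m : ℕ) (w : ℕ → Fin q) : ℝ :=
  ∏ j ∈ Finset.range m, W (prependStage w x (j + 1))

/-- The process `Φ_{x,a}(m) = e^{S_a/2} ∑_{u ∈ 𝔄^{m-1}} μ_{W,x}(Λ(u·a))`, the sum
over all words of length `m` whose last letter is `a`. -/
noncomputable def PhiProc {q : ℕ} (W : (ℕ → Fin q) → ℝ) (Ent : Fin q → ℝ)
    (x : ℕ → Fin q) (a : Fin q) (m : ℕ) : ℝ :=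
  Real.exp (Ent a / 2) *
    ∑ u : Fin (m - 1) → Fin q,
      mucyl W x m (fun i => if h : i < m - 1 then u ⟨i, h⟩ else a)

/-! For the Keane potential the newest factor of `μ_{W,x}(Λ(u·b·a))` is
`W(a·b·…) = v_a 𝒮_{a,b} / v_b`, so extending a word by `a` multiplies its weight by
`v_a 𝒮_{a,b} v_b⁻¹`. Since `v_a = e^{-S_a/2}`, the prefactor `e^{S_a/2}` of `Φ_{x,a}` cancels
`v_a` and `v_b⁻¹` becomes the prefactor `e^{S_b/2}` of `Φ_{x,b}`. -/

/-- The word `u·a` as a sequence, constant `a` from position `m` on; these are the words summed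
over in `PhiProc`. -/
def snocWord {q m : ℕ} (u : Fin m → Fin q) (a : Fin q) : ℕ → Fin q :=
  fun i => if h : i < m then u ⟨i, h⟩ else a

lemma snocWord_apply_self {q m : ℕ} (u : Fin m → Fin q) (a : Fin q) : snocWord u a m = a := by
  simp [snocWord]

lemma snocWord_snoc_of_lt {q n : ℕ} (u : Fin n → Fin q) (a b : Fin q) {i : ℕ}
    (hi : i < n + 1) : snocWord (Fin.snoc u b : Fin (n + 1) → Fin q) a i = snocWord u b i := by
  obtain hin | rfl := Nat.lt_succ_iff_lt_or_eq.mp hi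
  · simp [snocWord, hin, hi, Fin.snoc]
  · simp [snocWord, Fin.snoc]

lemma PhiProc_succ {q : ℕ} (W : (ℕ → Fin q) → ℝ) (Ent : Fin q → ℝ) (x : ℕ → Fin q) (a : Fin q)
    (n : ℕ) : PhiProc W Ent x a (n + 1) =
      Real.exp (Ent a / 2) * ∑ u : Fin n → Fin q, mucyl W x (n + 1) (snocWord u a) :=
  rfl

lemma prependStage_congr {q : ℕ} {w w' : ℕ → Fin q} (x : ℕ → Fin q) {j : ℕ}
    (h : ∀ i < j, w i = w' i) : prependStage w x j = prependStage w' x j := by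
  induction j with
  | zero => rfl
  | succ k ih =>
    simp only [prependStage, h k k.lt_succ_self, ih fun i hi => h i (hi.trans k.lt_succ_self)]

lemma mucyl_congr {q : ℕ} (W : (ℕ → Fin q) → ℝ) (x : ℕ → Fin q) {m : ℕ}
    {w w' : ℕ → Fin q} (h : ∀ i < m, w i = w' i) : mucyl W x m w = mucyl W x m w' :=
  Finset.prod_congr rfl fun _ hj =>
    congrArg W <| prependStage_congr x fun i hi =>
      h i (Nat.lt_of_lt_of_le hi (Finset.mem_range.mp hj))

lemma mucyl_succ_succ_of_keane {q : ℕ} {M : Matrix (Fin q) (Fin q) ℝ} {v : Fin q → ℝ}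
    {W : (ℕ → Fin q) → ℝ} (hW : ∀ x, W x = v (x 0) * M (x 0) (x 1) * (v (x 1))⁻¹)
    (x w : ℕ → Fin q) (m : ℕ) :
    mucyl W x (m + 2) w =
      mucyl W x (m + 1) w * (v (w (m + 1)) * M (w (m + 1)) (w m) * (v (w m))⁻¹) := by
  rw [mucyl, Finset.prod_range_succ, hW]
  rfl

lemma sum_pi_fin_succ_eq_sum_snoc {α β : Type*} [Fintype β] [AddCommMonoid α] {n : ℕ}
    (f : (Fin (n + 1) → β) → α) :
    ∑ u, f u = ∑ b, ∑ u : Fin n → β, f (Fin.snoc u b) := by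
  rw [← (Fin.snocEquiv fun _ => β).sum_comp, Fintype.sum_prod_type]
  rfl

lemma PhiProc_succ_succ_of_keane {q : ℕ} {M : Matrix (Fin q) (Fin q) ℝ} {v : Fin q → ℝ}
    {W : (ℕ → Fin q) → ℝ} (hW : ∀ x, W x = v (x 0) * M (x 0) (x 1) * (v (x 1))⁻¹)
    (Ent : Fin q → ℝ) (x : ℕ → Fin q) (a : Fin q) (n : ℕ) :
    PhiProc W Ent x a (n + 2) = Real.exp (Ent a / 2) * v a *
      ∑ b, M a b * (v b)⁻¹ * ∑ u : Fin n → Fin q, mucyl W x (n + 1) (snocWord u b) := by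
  rw [PhiProc_succ, sum_pi_fin_succ_eq_sum_snoc]
  simp only [mucyl_succ_succ_of_keane hW, Finset.mul_sum, mul_assoc]
  refine Finset.sum_congr rfl fun b _ => Finset.sum_congr rfl fun u _ => ?_
  rw [mucyl_congr W x fun i hi => snocWord_snoc_of_lt u a b hi, snocWord_apply_self,
    snocWord_snoc_of_lt u a b n.lt_succ_self, snocWord_apply_self]
  ring

theorem stmt3_general (q : ℕ) (M : Matrix (Fin q) (Fin q) ℝ)
    (v : Fin q → ℝ)
    (Ent : Fin q → ℝ) (hEnt : ∀ a, v a = Real.exp (-(Ent a) / 2))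
    (W : (ℕ → Fin q) → ℝ)
    (hW : ∀ x, W x = v (x 0) * M (x 0) (x 1) * (v (x 1))⁻¹)
    (x : ℕ → Fin q) :
    ∀ m ≥ 1, ∀ a : Fin q,
      PhiProc W Ent x a (m + 1) = ∑ b : Fin q, M a b * PhiProc W Ent x b m := by
  rintro m hm a
  obtain ⟨n, rfl⟩ := Nat.exists_eq_add_of_le' hm
  have hexp_mul : Real.exp (Ent a / 2) * v a = 1 := by
    rw [hEnt, ← Real.exp_add, ← Real.exp_zero]
    ring_nf
  have hinv : ∀ b, (v b)⁻¹ = Real.exp (Ent b / 2) := fun b => by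
    rw [hEnt, ← Real.exp_neg]
    ring_nf
  rw [PhiProc_succ_succ_of_keane hW, hexp_mul, one_mul]
  simp only [PhiProc_succ, hinv, mul_assoc]

/-- The multifractal measure of the Keane potential
`W(x) = v_{x₀} 𝒮_{x₀,x₁} v_{x₁}⁻¹` defines a stochastic process on the Eternal
Symmetree without pruning: `Φ_{x,a}(m+1) = ∑_b 𝒮_{a,b} Φ_{x,b}(m)`. -/
theorem stmt3 (q : ℕ) (hq : 2 ≤ q) (M : Matrix (Fin q) (Fin q) ℝ)
    (hpos : ∀ a b, 0 < M a b) (hsymm : M.IsSymm)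
    (v : Fin q → ℝ) (hv : ∀ a, 0 < v a)
    (hleft : ∀ b, ∑ a, v a * M a b = v b)
    (hnorm : ∑ a, v a = 1)
    (Ent : Fin q → ℝ) (hEnt : ∀ a, v a = Real.exp (-(Ent a) / 2))
    (W : (ℕ → Fin q) → ℝ)
    (hW : ∀ x, W x = v (x 0) * M (x 0) (x 1) * (v (x 1))⁻¹)
    (x : ℕ → Fin q) :
    ∀ m ≥ 1, ∀ a : Fin q,
      PhiProc W Ent x a (m + 1) = ∑ b : Fin q, M a b * PhiProc W Ent x b m :=
  stmt3_general q M v Ent hEnt W hW x
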